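/- arXiv:2304.09283 — 5 statements merged into one kernel-verified Lean document; each statement's English description precedes it below -/
import Mathlib

section
/- With offsets defined by o_0 = 0 and o_{i+1} = max(0, o_i + s_i - B), if ∑_{i=0}^{m-1} s_i ≤ m·B and o_m = 0, then all m·B table cells suffice: for every i, the block occupying positions i·B + o_i through i·B + o_i + s_i - 1 lies within [0, m·B - 1]. -/
/-!
The end of block `i` satisfies `i·B + o i + s i ≤ (i+1)·B + o (i+1)` straight from the recursion,
and since the sizes are nonnegative, `j·B + o j` is nondecreasing in `j`; so every block ends
before `m·B + o m = m·B`.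
-/

section Offsets

variable {B : ℤ} {s o : ℕ → ℤ}

theorem offset_nonneg (hrec : ∀ i, o (i + 1) = max 0 (o i + s i - B)) (h0 : 0 ≤ o 0) :
    ∀ i, 0 ≤ o i
  | 0 => h0
  | i + 1 => hrec i ▸ le_max_left _ _

theorem offset_add_size_le (hrec : ∀ i, o (i + 1) = max 0 (o i + s i - B)) (i : ℕ) :
    o i + s i ≤ o (i + 1) + B := by
  have := hrec i ▸ le_max_right 0 (o i + s i - B)
  linarith

theorem monotone_offset_add_mul (hrec : ∀ i, o (i + 1) = max 0 (o i + s i - B))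
    (hs : ∀ i, 0 ≤ s i) : Monotone fun j : ℕ => o j + j * B :=
  monotone_nat_of_le_succ fun j => by
    have := offset_add_size_le hrec j
    push_cast
    linarith [hs j]

end Offsets

theorem slick_blocks_fit_in_table_general (B : ℤ) (hB : 0 < B) (m : ℕ) (s : ℕ → ℤ)
    (hs : ∀ i, 0 ≤ s i)
    (o : ℕ → ℤ) (h0 : o 0 = 0)
    (hrec : ∀ i, o (i + 1) = max 0 (o i + s i - B))
    (hlast : o m = 0) :
    ∀ i < m, 0 ≤ (i : ℤ) * B + o i ∧ (i : ℤ) * B + o i + s i ≤ (m : ℤ) * B := by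
  intro i hi
  refine ⟨add_nonneg (by positivity) (offset_nonneg hrec h0.ge i), ?_⟩
  have hmono := monotone_offset_add_mul hrec hs (Nat.succ_le_of_lt hi)
  simp only [hlast, Nat.cast_succ] at hmono
  linarith [offset_add_size_le hrec i]

/-- If the total number of elements is at most m·B and the final offset o m is 0,
then every block i (occupying positions i·B + o i .. i·B + o i + s i - 1) fits
within the table positions 0 .. m·B - 1. -/
theorem slick_blocks_fit_in_table (B : ℤ) (hB : 0 < B) (m : ℕ) (s : ℕ → ℤ)
    (hs : ∀ i, 0 ≤ s i) (hsB : ∀ i, s i ≤ 2 * B)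
    (o : ℕ → ℤ) (h0 : o 0 = 0)
    (hrec : ∀ i, o (i + 1) = max 0 (o i + s i - B))
    (htotal : (∑ i ∈ Finset.range m, s i) ≤ (m : ℤ) * B)
    (hlast : o m = 0) :
    ∀ i < m, 0 ≤ (i : ℤ) * B + o i ∧ (i : ℤ) * B + o i + s i ≤ (m : ℤ) * B :=
  slick_blocks_fit_in_table_general B hB m s hs o h0 hrec hlast
end

section
/- Blocks defined by the sliding-block offset recursion never overlap: for all i < j, the position ranges [i·B + o_i, i·B + o_i + s_i - 1] and [j·B + o_j, j·B + o_j + s_j - 1] are disjoint. -/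
/-! Block `i` ends no later than block `i + 1` starts, because the new offset is at least the
overhang `o i + s i - B`. Block starts are therefore monotone in `i` (block lengths are
nonnegative), so block `i` ends before every later block starts. -/

theorem Finset.Ico_disjoint_Ico_of_le {α : Type*} [PartialOrder α] [LocallyFiniteOrder α]
    {a b c d : α} (h : b ≤ c) : Disjoint (Finset.Ico a b) (Finset.Ico c d) :=
  (Finset.Ico_disjoint_Ico_consecutive a b d).mono_right (Finset.Ico_subset_Ico_left h)

theorem le_of_interleaved {α : Type*} [Preorder α] {a b : ℕ → α}
    (hab : ∀ i, a i ≤ b i) (hba : ∀ i, b i ≤ a (i + 1)) {i j : ℕ} (hij : i < j) :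
    b i ≤ a j :=
  (hba i).trans <| monotone_nat_of_le_succ (fun n => (hab n).trans (hba n)) hij

theorem block_end_le_next_start (B : ℤ) (s o : ℕ → ℤ)
    (hrec : ∀ i, o (i + 1) = max 0 (o i + s i - B)) (i : ℕ) :
    (i : ℤ) * B + o i + s i ≤ ((i + 1 : ℕ) : ℤ) * B + o (i + 1) := by
  have hover : o i + s i - B ≤ o (i + 1) := hrec i ▸ le_max_right _ _
  push_cast
  linarith

theorem slick_blocks_disjoint_general (B : ℤ) (s : ℕ → ℤ) (hs : ∀ i, 0 ≤ s i)
    (o : ℕ → ℤ)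
    (hrec : ∀ i, o (i + 1) = max 0 (o i + s i - B)) :
    ∀ i j : ℕ, i < j →
      Disjoint (Finset.Ico ((i : ℤ) * B + o i) ((i : ℤ) * B + o i + s i))
               (Finset.Ico ((j : ℤ) * B + o j) ((j : ℤ) * B + o j + s j)) := by
  intro i j hij
  refine Finset.Ico_disjoint_Ico_of_le ?_
  refine le_of_interleaved (a := fun k : ℕ => (k : ℤ) * B + o k) (fun k => ?_)
    (block_end_le_next_start B s o hrec) hij
  simpa using hs k

/-- Blocks under the sliding-block offset recursion never overlap: for i < j the
position ranges [i·B + o i, i·B + o i + s i) and [j·B + o j, j·B + o j + s j)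
are disjoint. -/
theorem slick_blocks_disjoint (B : ℤ) (hB : 0 < B) (s : ℕ → ℤ) (hs : ∀ i, 0 ≤ s i)
    (o : ℕ → ℤ) (h0 : o 0 = 0)
    (hrec : ∀ i, o (i + 1) = max 0 (o i + s i - B)) :
    ∀ i j : ℕ, i < j →
      Disjoint (Finset.Ico ((i : ℤ) * B + o i) ((i : ℤ) * B + o i + s i))
               (Finset.Ico ((j : ℤ) * B + o j) ((j : ℤ) * B + o j + s j)) :=
  slick_blocks_disjoint_general B s hs o hrec
end

section
/- In the greedy build, the number of elements that must be bumped from block i to satisfy all three constraints is exactly max(0, |b| - B̂, o + iB + |b| - m, o + |b| - B - ô), and after bumping this many elements the resulting next offset max(0, o + |b'| - B) is at most ô, the block size |b'| is at most B̂, and the block fits within the table of size m. -/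
/-! Each of the three constraints on a block from which `k` elements are bumped is a lower
bound on `k`, so the admissible `k ≥ 0` form the ray above the largest threshold and `0`;
its least element is the excess. -/

theorem isLeast_max_of_forall_iff {α : Type*} [LinearOrder α] {P : α → Prop} {a t : α}
    (hP : ∀ k, P k ↔ t ≤ k) : IsLeast {k | a ≤ k ∧ P k} (max a t) := by
  have hset : {k | a ≤ k ∧ P k} = Set.Ici (max a t) := by
    ext k
    simp only [Set.mem_ofPred_eq, Set.mem_Ici, hP, max_le_iff]
  exact hset ▸ isLeast_Ici

theorem bump_constraints_iff {B Bmax omax m o b s k : ℤ} (homax : 0 ≤ omax) :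
    (b - k ≤ Bmax ∧ max 0 (o + (b - k) - B) ≤ omax ∧ s + (b - k) ≤ m) ↔
      max (b - Bmax) (max (s + b - m) (o + b - B - omax)) ≤ k := by
  simp only [max_le_iff]
  omega

theorem slick_greedy_excess_general (B Bmax omax m o b : ℤ) (i : ℕ)
    (homax : 0 ≤ omax) :
    let excess := max 0 (max (b - Bmax) (max (o + (i : ℤ) * B + b - m) (o + b - B - omax)))
    (b - excess ≤ Bmax) ∧
    (max 0 (o + (b - excess) - B) ≤ omax) ∧
    (o + (i : ℤ) * B + (b - excess) ≤ m) ∧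
    (∀ k : ℤ, 0 ≤ k → k < excess →
      ¬ ((b - k ≤ Bmax) ∧ max 0 (o + (b - k) - B) ≤ omax ∧
          o + (i : ℤ) * B + (b - k) ≤ m)) := by
  intro excess
  obtain ⟨⟨-, hsize, hoffset, hfits⟩, hleast⟩ :=
    isLeast_max_of_forall_iff (a := (0 : ℤ)) fun k => bump_constraints_iff (k := k) homax
  exact ⟨hsize, hoffset, hfits, fun k hk0 hk hsat => (hleast ⟨hk0, hsat⟩).not_gt hk⟩

/-- Greedy build: the number of elements that must be bumped from block i is
exactly excess = max(0, max(|b| - B̂, max(o + iB + |b| - m, o + |b| - B - ô))):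
after bumping `excess` elements all three constraints hold (block size at most
B̂, next offset at most ô, block ends within the table of size m), and bumping
any smaller nonnegative number violates one of them. -/
theorem slick_greedy_excess (B Bmax omax m o b : ℤ) (i : ℕ)
    (hB : 0 < B) (hBmax : B ≤ Bmax) (homax : 0 ≤ omax)
    (ho0 : 0 ≤ o) (ho : o ≤ omax) (hb : 0 ≤ b) :
    let excess := max 0 (max (b - Bmax) (max (o + (i : ℤ) * B + b - m) (o + b - B - omax)))
    (b - excess ≤ Bmax) ∧
    (max 0 (o + (b - excess) - B) ≤ omax) ∧
    (o + (i : ℤ) * B + (b - excess) ≤ m) ∧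
    (∀ k : ℤ, 0 ≤ k → k < excess →
      ¬ ((b - k ≤ Bmax) ∧ max 0 (o + (b - k) - B) ≤ omax ∧
          o + (i : ℤ) * B + (b - k) ≤ m)) :=
  slick_greedy_excess_general B Bmax omax m o b i homax
end

section
/- Correctness of the find invariant: if every stored element e is either in the backyard (when δ(key(e)) < t_{h(key(e))}) or stored at some position in blockRange(h(key(e))) = [h(key(e))·B + o_{h(key(e))}, (h(key(e))+1)·B + o_{h(key(e))+1} - g_{h(key(e))} - 1], and distinct blocks occupy disjoint ranges, then the find procedure (check threshold, else scan blockRange) returns the element with key k if and only if some stored element has key k. -/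
/-!
`find` searches a single place: the backyard when `k` is below its block's threshold, the block
range of `h k` otherwise. Each search is sound because the place only holds elements of `S`, and
complete because invariant (1) puts every element of `S` with key `k` in exactly that place.
-/

theorem Set.exists_fst_eq_iff_of_subset {K V : Type*} {A S : Set (K × V)} {k : K}
    (hsound : A ⊆ S) (hcomplete : ∀ e ∈ S, e.1 = k → e ∈ A) :
    (∃ e ∈ A, e.1 = k) ↔ ∃ e ∈ S, e.1 = k :=
  ⟨fun ⟨e, he, hek⟩ => ⟨e, hsound he, hek⟩, fun ⟨e, he, hek⟩ => ⟨e, hcomplete e he hek, hek⟩⟩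

theorem slick_find_correct_general {K V : Type*}
    (h : K → ℕ) (δ : K → ℕ) (t : ℕ → ℕ)
    (T : ℕ → K × V) (S T' : Set (K × V))
    (blockRange : ℕ → Finset ℕ)
    -- invariant (1): each element of S is bumped iff below threshold, and is
    -- stored in the backyard resp. in its block's range accordingly
    (hS : ∀ e ∈ S, (δ e.1 < t (h e.1) → e ∈ T') ∧
      (¬ δ e.1 < t (h e.1) → ∃ j ∈ blockRange (h e.1), T j = e))
    -- soundness of the backyard
    (hT' : ∀ e ∈ T', e ∈ S ∧ δ e.1 < t (h e.1))
    -- soundness of the table: positions in block i hold elements of S hashed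
    -- to block i that are not bumped
    (hT : ∀ i, ∀ j ∈ blockRange i, T j ∈ S ∧ h (T j).1 = i ∧ ¬ δ (T j).1 < t (h (T j).1)) :
    ∀ k : K,
      (δ k < t (h k) → ((∃ e ∈ T', e.1 = k) ↔ ∃ e ∈ S, e.1 = k)) ∧
      (¬ δ k < t (h k) →
        ((∃ j ∈ blockRange (h k), (T j).1 = k) ↔ ∃ e ∈ S, e.1 = k)) := by
  intro k
  refine ⟨fun hbumped => ?_, fun hstored => ?_⟩
  · refine Set.exists_fst_eq_iff_of_subset (fun e he => (hT' e he).1) ?_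
    rintro e he rfl
    exact (hS e he).1 hbumped
  · have hblock : T '' blockRange (h k) ⊆ S := by
      rintro _ ⟨j, hj, rfl⟩
      exact (hT (h k) j hj).1
    refine Set.exists_mem_image.symm.trans (Set.exists_fst_eq_iff_of_subset hblock ?_)
    rintro e he rfl
    obtain ⟨j, hj, rfl⟩ := (hS e he).2 hstored
    exact Set.mem_image_of_mem T hj

/-- Correctness of `find`: under the Slick invariants — every element of the
represented set S is either bumped to the backyard T' (exactly when its
threshold hash is below its block's threshold) or stored at some position of
its block's range; the backyard and table only contain elements of S placed
consistently; block ranges are disjoint; keys of S are distinct — the find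
procedure (check the threshold and search the backyard, else scan the block
range) finds key k iff some element of S has key k. -/
theorem slick_find_correct {K V : Type*} (m B : ℕ) (hB : 0 < B)
    (h : K → ℕ) (δ : K → ℕ) (t o g : ℕ → ℕ)
    (T : ℕ → K × V) (S T' : Set (K × V))
    (blockRange : ℕ → Finset ℕ)
    (hrange : ∀ i, blockRange i = Finset.Ico (i * B + o i) ((i + 1) * B + o (i + 1) - g i))
    -- invariant (1): each element of S is bumped iff below threshold, and is
    -- stored in the backyard resp. in its block's range accordingly
    (hS : ∀ e ∈ S, (δ e.1 < t (h e.1) → e ∈ T') ∧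
      (¬ δ e.1 < t (h e.1) → ∃ j ∈ blockRange (h e.1), T j = e))
    -- soundness of the backyard
    (hT' : ∀ e ∈ T', e ∈ S ∧ δ e.1 < t (h e.1))
    -- soundness of the table: positions in block i hold elements of S hashed
    -- to block i that are not bumped
    (hT : ∀ i, ∀ j ∈ blockRange i, T j ∈ S ∧ h (T j).1 = i ∧ ¬ δ (T j).1 < t (h (T j).1))
    -- invariant (2): block ranges of distinct blocks are disjoint
    (hdisj : ∀ i i', i ≠ i' → Disjoint (blockRange i) (blockRange i'))
    -- invariant (3): keys in S are distinct
    (hkeys : ∀ e ∈ S, ∀ e' ∈ S, e.1 = e'.1 → e = e') :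
    ∀ k : K,
      (δ k < t (h k) → ((∃ e ∈ T', e.1 = k) ↔ ∃ e ∈ S, e.1 = k)) ∧
      (¬ δ k < t (h k) →
        ((∃ j ∈ blockRange (h k), (T j).1 = k) ↔ ∃ e ∈ S, e.1 = k)) :=
  slick_find_correct_general h δ t T S T' blockRange hS hT' hT
end

section
/- Deletion preserves the Slick invariant: if the table satisfies the block-layout invariant (each block i's elements stored contiguously in [blockStart(i), blockEnd(i)] with blockEnd(i) = iB + B + o_{i+1} - g_i - 1), then overwriting the found element at position j with the element at blockEnd(h(k)) and incrementing g_{h(k)} yields a state whose represented set is the old set minus the element with key k, and which still satisfies the invariant. -/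
/-!
Deletion is a relabelling. Off the vacated last slot `L` of block `h k`, the new table is the old
one composed with the transposition `(j L)`, and this transposition maps the shrunken block onto
the old block with the hole at `j` removed, while fixing every other block. Hence the new state
is the old one with position `j` discarded, seen through an injective relabelling of positions:
every part of the invariant transfers along it, and since keys are unique, the only element lost
is the one with key `k`.
-/

open Function

theorem Nat.Ico_sub_one_right_eq_erase (a b : ℕ) :
    Finset.Ico a (b - 1) = (Finset.Ico a b).erase (b - 1) := by
  ext x
  simp only [Finset.mem_Ico, Finset.mem_erase]
  omega

theorem update_apply_eq_apply_swap {α β : Type*} [DecidableEq α] (T : α → β) {j L x : α}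
    (hx : x ≠ L) : update T j (T L) x = T (Equiv.swap j L x) := by
  by_cases hxj : x = j
  · subst hxj
    simp
  · rw [update_of_ne hxj, Equiv.swap_apply_of_ne_of_ne hxj hx]

section

variable {α α' K V : Type*} {M : ℕ} {S : ℕ → Finset α} {h : K → ℕ} {T : α → K × V}

def blockContents {β : Type*} (M : ℕ) (S : ℕ → Finset α) (T : α → β) : Set β :=
  {e | ∃ i < M, ∃ x ∈ S i, T x = e}

structure BlockLayout (M : ℕ) (S : ℕ → Finset α) (h : K → ℕ) (T : α → K × V) : Prop where
  hash : ∀ i < M, ∀ x ∈ S i, h (T x).1 = i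
  disjoint : ∀ i < M, ∀ i' < M, i ≠ i' → Disjoint (S i) (S i')
  key_injective : ∀ i < M, ∀ i' < M, ∀ x ∈ S i, ∀ x' ∈ S i', (T x).1 = (T x').1 → x = x'

namespace BlockLayout

theorem eq_of_mem_of_mem (hl : BlockLayout M S h T) {i i' : ℕ} (hi : i < M) (hi' : i' < M)
    {x : α} (hx : x ∈ S i) (hx' : x ∈ S i') : i = i' := by
  by_contra hne
  exact Finset.disjoint_left.mp (hl.disjoint i hi i' hi' hne) hx hx'

theorem of_injective (hl : BlockLayout M S h T) {S' : ℕ → Finset α'} {T' : α' → K × V}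
    {f : α' → α} (hf : Injective f) (hmaps : ∀ i < M, ∀ x ∈ S' i, f x ∈ S i)
    (hT : ∀ i < M, ∀ x ∈ S' i, T' x = T (f x)) : BlockLayout M S' h T' where
  hash i hi x hx := by
    rw [hT i hi x hx]
    exact hl.hash i hi _ (hmaps i hi x hx)
  disjoint i hi i' hi' hne := Finset.disjoint_left.mpr fun x hx hx' =>
    hne (hl.eq_of_mem_of_mem hi hi' (hmaps i hi x hx) (hmaps i' hi' x hx'))
  key_injective i hi i' hi' x hx x' hx' hkey := by
    rw [hT i hi x hx, hT i' hi' x' hx'] at hkey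
    exact hf (hl.key_injective i hi i' hi' _ (hmaps i hi x hx) _ (hmaps i' hi' x' hx') hkey)

variable [DecidableEq α] {S' : ℕ → Finset α} {i₀ : ℕ} {j L : α}
  (hl : BlockLayout M S h T) (hi₀ : i₀ < M) (hj : j ∈ S i₀) (hL : L ∈ S i₀)
  (hS'₀ : S' i₀ = (S i₀).erase L) (hS' : ∀ i ≠ i₀, S' i = S i)
include hl hi₀ hL hS'₀ hS'

theorem ne_last_of_mem_delete {i : ℕ} (hi : i < M) {x : α} (hx : x ∈ S' i) : x ≠ L := by
  rintro rfl
  by_cases hii : i = i₀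
  · subst hii
    simp [hS'₀] at hx
  · rw [hS' i hii] at hx
    exact hii (hl.eq_of_mem_of_mem hi hi₀ hx hL)

include hj

theorem swap_mem_of_mem_delete {i : ℕ} (hi : i < M) {x : α} (hx : x ∈ S' i) :
    Equiv.swap j L x ∈ S i := by
  by_cases hii : i = i₀
  · subst hii
    have hxS : x ∈ S i := Finset.mem_of_mem_erase (hS'₀ ▸ hx)
    rw [Equiv.swap_apply_def]
    split_ifs <;> assumption
  · rw [hS' i hii] at hx
    have hxj : x ≠ j := fun hxj => hii (hl.eq_of_mem_of_mem hi hi₀ hx (hxj ▸ hj))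
    have hxL : x ≠ L := fun hxL => hii (hl.eq_of_mem_of_mem hi hi₀ hx (hxL ▸ hL))
    rwa [Equiv.swap_apply_of_ne_of_ne hxj hxL]

theorem swap_mem_delete_of_mem {i : ℕ} (hi : i < M) {x : α} (hx : x ∈ S i) (hxj : x ≠ j) :
    Equiv.swap j L x ∈ S' i := by
  by_cases hii : i = i₀
  · subst hii
    rw [hS'₀, Finset.mem_erase, Equiv.swap_apply_def]
    split_ifs with hxL
    · exact absurd hxL hxj
    · exact ⟨fun hjL => hxj (by rw [‹x = L›, hjL]), hj⟩
    · exact ⟨‹¬x = L›, hx⟩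
  · rwa [hS' i hii, Equiv.swap_apply_of_ne_of_ne hxj
      fun hxL => hii (hl.eq_of_mem_of_mem hi hi₀ hx (hxL ▸ hL))]

theorem delete : BlockLayout M S' h (update T j (T L)) :=
  hl.of_injective (Equiv.injective _)
    (fun _ hi _ hx => hl.swap_mem_of_mem_delete hi₀ hj hL hS'₀ hS' hi hx)
    (fun _ hi _ hx => update_apply_eq_apply_swap T (hl.ne_last_of_mem_delete hi₀ hL hS'₀ hS' hi hx))

theorem blockContents_delete :
    blockContents M S' (update T j (T L)) = blockContents M S T \ {e | e.1 = (T j).1} := by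
  ext e
  constructor
  · rintro ⟨i, hi, x, hx, rfl⟩
    have hxL := hl.ne_last_of_mem_delete hi₀ hL hS'₀ hS' hi hx
    have hσx := hl.swap_mem_of_mem_delete hi₀ hj hL hS'₀ hS' hi hx
    rw [update_apply_eq_apply_swap T hxL]
    refine ⟨⟨i, hi, _, hσx, rfl⟩, fun hkey => hxL ?_⟩
    have hσj := hl.key_injective i hi i₀ hi₀ _ hσx j hj hkey
    rwa [Equiv.swap_apply_eq_iff, Equiv.swap_apply_left] at hσj
  · rintro ⟨⟨i, hi, x, hx, rfl⟩, hkey⟩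
    have hxj : x ≠ j := fun hxj => hkey (congrArg (fun y => (T y).1) hxj)
    have hσx := hl.swap_mem_delete_of_mem hi₀ hj hL hS'₀ hS' hi hx hxj
    refine ⟨i, hi, _, hσx, ?_⟩
    rw [update_apply_eq_apply_swap T (hl.ne_last_of_mem_delete hi₀ hL hS'₀ hS' hi hσx),
      Equiv.swap_apply_self]

end BlockLayout

end

theorem slick_delete_correct_general {K V : Type*} (M B : ℕ)
    (h : K → ℕ) (o g : ℕ → ℕ) (T : ℕ → K × V) (k : K) (j : ℕ)
    (start fin : ℕ → ℕ)
    (hfin : ∀ i, fin i = i * B + B + o (i + 1) - g i)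
    (hdisj : ∀ i < M, ∀ i' < M, i ≠ i' →
      Disjoint (Finset.Ico (start i) (fin i)) (Finset.Ico (start i') (fin i')))
    (hhash : ∀ i < M, ∀ x ∈ Finset.Ico (start i) (fin i), h ((T x).1) = i)
    (hinj : ∀ i < M, ∀ i' < M, ∀ x ∈ Finset.Ico (start i) (fin i),
      ∀ x' ∈ Finset.Ico (start i') (fin i'), (T x).1 = (T x').1 → x = x')
    (hkm : h k < M) (hj : j ∈ Finset.Ico (start (h k)) (fin (h k)))
    (hkey : (T j).1 = k) :
    let T2 := Function.update T j (T (fin (h k) - 1))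
    let g2 := Function.update g (h k) (g (h k) + 1)
    let fin2 : ℕ → ℕ := fun i => i * B + B + o (i + 1) - g2 i
    -- the represented set is the old set minus the element with key k
    ({e | ∃ i < M, ∃ x ∈ Finset.Ico (start i) (fin2 i), T2 x = e} =
      {e | ∃ i < M, ∃ x ∈ Finset.Ico (start i) (fin i), T x = e} \ {e | e.1 = k}) ∧
    -- block-layout invariant is preserved
    (∀ i < M, ∀ x ∈ Finset.Ico (start i) (fin2 i), h ((T2 x).1) = i) ∧
    (∀ i < M, ∀ i' < M, i ≠ i' →
      Disjoint (Finset.Ico (start i) (fin2 i)) (Finset.Ico (start i') (fin2 i'))) ∧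
    (∀ i < M, ∀ i' < M, ∀ x ∈ Finset.Ico (start i) (fin2 i),
      ∀ x' ∈ Finset.Ico (start i') (fin2 i'), (T2 x).1 = (T2 x').1 → x = x') := by
  intro T2 g2 fin2
  have hl : BlockLayout M (fun i => Finset.Ico (start i) (fin i)) h T := ⟨hhash, hdisj, hinj⟩
  have hL : fin (h k) - 1 ∈ Finset.Ico (start (h k)) (fin (h k)) := by
    rw [Finset.mem_Ico] at hj ⊢
    omega
  have hfin2₀ : fin2 (h k) = fin (h k) - 1 := by
    simp only [fin2, g2, update_self, hfin]
    omega
  have hS'₀ : Finset.Ico (start (h k)) (fin2 (h k)) =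
      (Finset.Ico (start (h k)) (fin (h k))).erase (fin (h k) - 1) := by
    rw [hfin2₀, Nat.Ico_sub_one_right_eq_erase]
  have hS' : ∀ i ≠ h k, Finset.Ico (start i) (fin2 i) = Finset.Ico (start i) (fin i) := by
    intro i hi
    simp only [fin2, g2, update_of_ne hi, hfin]
  have hl' := hl.delete hkm hj hL hS'₀ hS'
  have hcontents := hl.blockContents_delete hkm hj hL hS'₀ hS'
  rw [hkey] at hcontents
  exact ⟨hcontents, hl'.hash, hl'.disjoint, hl'.key_injective⟩

/-- Deletion preserves the Slick invariant: if block i occupies positions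
[iB + o i, iB + B + o (i+1) - g i) (contiguous, disjoint across blocks, all its
elements hashing to i, keys at distinct occupied positions distinct), the key k
is stored at position j of its block h k, then overwriting T j with the
element at the block's last position and incrementing g (h k) yields a state
whose represented set is the old set minus the element with key k, and which
still satisfies the invariant. -/
theorem slick_delete_correct {K V : Type*} (M B : ℕ) (hB : 0 < B)
    (h : K → ℕ) (o g : ℕ → ℕ) (T : ℕ → K × V) (k : K) (j : ℕ)
    (start fin : ℕ → ℕ)
    (hstart : ∀ i, start i = i * B + o i)
    (hfin : ∀ i, fin i = i * B + B + o (i + 1) - g i)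
    (hne : ∀ i < M, start i ≤ fin i)
    (hdisj : ∀ i < M, ∀ i' < M, i ≠ i' →
      Disjoint (Finset.Ico (start i) (fin i)) (Finset.Ico (start i') (fin i')))
    (hhash : ∀ i < M, ∀ x ∈ Finset.Ico (start i) (fin i), h ((T x).1) = i)
    (hinj : ∀ i < M, ∀ i' < M, ∀ x ∈ Finset.Ico (start i) (fin i),
      ∀ x' ∈ Finset.Ico (start i') (fin i'), (T x).1 = (T x').1 → x = x')
    (hkm : h k < M) (hj : j ∈ Finset.Ico (start (h k)) (fin (h k)))
    (hkey : (T j).1 = k) :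
    let T2 := Function.update T j (T (fin (h k) - 1))
    let g2 := Function.update g (h k) (g (h k) + 1)
    let fin2 : ℕ → ℕ := fun i => i * B + B + o (i + 1) - g2 i
    -- the represented set is the old set minus the element with key k
    ({e | ∃ i < M, ∃ x ∈ Finset.Ico (start i) (fin2 i), T2 x = e} =
      {e | ∃ i < M, ∃ x ∈ Finset.Ico (start i) (fin i), T x = e} \ {e | e.1 = k}) ∧
    -- block-layout invariant is preserved
    (∀ i < M, ∀ x ∈ Finset.Ico (start i) (fin2 i), h ((T2 x).1) = i) ∧
    (∀ i < M, ∀ i' < M, i ≠ i' →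
      Disjoint (Finset.Ico (start i) (fin2 i)) (Finset.Ico (start i') (fin2 i'))) ∧
    (∀ i < M, ∀ i' < M, ∀ x ∈ Finset.Ico (start i) (fin2 i),
      ∀ x' ∈ Finset.Ico (start i') (fin2 i'), (T2 x).1 = (T2 x').1 → x = x') :=
  slick_delete_correct_general M B h o g T k j start fin hfin hdisj hhash hinj hkm hj hkey
end
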